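/- arXiv:2001.04517 — 4 statements merged into one kernel-verified Lean document; each statement's English description precedes it below -/
import Mathlib

section
/- Let G be a graph, let S = {B_i = B_{r_i}(s_i)}_{i∈[n]} be a set of n pairwise incomparable balls in G with pairwise distinct centers, and let E_S be a set of pairs {B_i, B_j} ⊆ S of intersecting balls, each associated with a median vertex x_{ij} of B_i and B_j such that the only balls of S containing x_{ij} are B_i and B_j. Then the graph H = (S, E_S) is a minor of G. -/
/-- The ball of radius `r` centered at `v` in the graph metric of `G`:
all vertices `u` with `d_G(v,u) ≤ r` (in particular, `u` must be reachable from `v`). -/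
def SimpleGraph.gBall {V : Type*} (G : SimpleGraph V) (v : V) (r : ℕ) : Set V :=
  {u | G.Reachable v u ∧ G.dist v u ≤ r}

/-- A ball hypergraph of `G` is given by its edge set `E`: a collection of subsets of
`V(G)`, each of which is a ball of `G`. -/
def IsBallHypergraph {V : Type*} (G : SimpleGraph V) (E : Set (Set V)) : Prop :=
  ∀ e ∈ E, ∃ v r, e = G.gBall v r

/-- `H` is a minor of `G`: there are pairwise disjoint connected nonempty branch sets
in `G`, one for each vertex of `H`, with an edge of `G` between the branch sets of any
two adjacent vertices of `H`. -/
def GraphMinor {W : Type*} {V : Type*} (H : SimpleGraph W) (G : SimpleGraph V) : Prop :=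
  ∃ f : W → Set V,
    (∀ w, (G.induce (f w)).Connected) ∧
    (Pairwise fun w₁ w₂ => Disjoint (f w₁) (f w₂)) ∧
    (∀ w₁ w₂, H.Adj w₁ w₂ → ∃ u ∈ f w₁, ∃ v ∈ f w₂, G.Adj u v)

/-- The matching number of the hypergraph with edge set `E`: the maximum number of
pairwise disjoint edges. -/
noncomputable def matchingNumber {V : Type*} [Fintype V] (E : Set (Set V)) : ℕ :=
  sSup {n | ∃ M : Finset (Set V), ↑M ⊆ E ∧ (M : Set (Set V)).Pairwise Disjoint ∧ M.card = n}

/-- The transversal number of the hypergraph with edge set `E`: the minimum size of a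
set of vertices meeting every edge. -/
noncomputable def transversalNumber {V : Type*} [Fintype V] (E : Set (Set V)) : ℕ :=
  sInf {n | ∃ T : Finset V, (∀ e ∈ E, ∃ v ∈ T, v ∈ e) ∧ T.card = n}


/-- `u` is a median vertex of the balls `B_{r₁}(v₁)` and `B_{r₂}(v₂)`: it lies on a
shortest path between `v₁` and `v₂` (i.e. `d(v₁,u) + d(u,v₂) = d(v₁,v₂)`), at distance
`⌊(r₁-r₂+d)/2⌋` from `v₁` and `⌈(r₂-r₁+d)/2⌉` from `v₂`, or symmetrically at distance
`⌈(r₁-r₂+d)/2⌉` from `v₁` and `⌊(r₂-r₁+d)/2⌋` from `v₂`, where `d = d(v₁,v₂)`. -/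
def IsMedianVertex {V : Type*} (G : SimpleGraph V) (v₁ : V) (r₁ : ℕ) (v₂ : V) (r₂ : ℕ)
    (u : V) : Prop :=
  G.Reachable v₁ u ∧ G.Reachable u v₂ ∧
  G.dist v₁ u + G.dist u v₂ = G.dist v₁ v₂ ∧
  (((G.dist v₁ u : ℤ) = ((r₁ : ℤ) - (r₂ : ℤ) + (G.dist v₁ v₂ : ℤ)).fdiv 2 ∧
    (G.dist u v₂ : ℤ) = ((r₂ : ℤ) - (r₁ : ℤ) + (G.dist v₁ v₂ : ℤ) + 1).fdiv 2) ∨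
   ((G.dist v₁ u : ℤ) = ((r₁ : ℤ) - (r₂ : ℤ) + (G.dist v₁ v₂ : ℤ) + 1).fdiv 2 ∧
    (G.dist u v₂ : ℤ) = ((r₂ : ℤ) - (r₁ : ℤ) + (G.dist v₁ v₂ : ℤ)).fdiv 2))

section Aux

variable {V : Type} {G : SimpleGraph V}

private lemma dist_tri {u v w : V} (h1 : G.Reachable u v) (h2 : G.Reachable v w) :
    G.dist u w ≤ G.dist u v + G.dist v w := by
  obtain ⟨p, hp⟩ := h1.exists_walk_length_eq_dist
  obtain ⟨q, hq⟩ := h2.exists_walk_length_eq_dist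
  calc G.dist u w ≤ (p.append q).length := SimpleGraph.dist_le _
    _ = _ := by rw [SimpleGraph.Walk.length_append, hp, hq]

private lemma exists_pred {a u : V} (hr : G.Reachable a u) (hd : G.dist a u ≠ 0) :
    ∃ w, G.Adj w u ∧ G.Reachable a w ∧ G.dist a w + 1 = G.dist a u := by
  obtain ⟨p, hp⟩ := hr.symm.exists_walk_length_eq_dist
  cases p with
  | nil =>
    rw [SimpleGraph.Walk.length_nil, SimpleGraph.dist_comm] at hp
    omega
  | cons h q =>
    rename_i b
    refine ⟨b, h.symm, q.reverse.reachable, ?_⟩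
    have h1 : G.dist a b ≤ q.length := by
      have := SimpleGraph.dist_le q.reverse
      rwa [SimpleGraph.Walk.length_reverse] at this
    obtain ⟨pb, hpb⟩ := q.reverse.reachable.exists_walk_length_eq_dist
    have h2 : G.dist a u ≤ G.dist a b + 1 := by
      have := SimpleGraph.dist_le (pb.concat h.symm)
      rwa [SimpleGraph.Walk.length_concat, hpb] at this
    have h3 : q.length + 1 = G.dist a u := by
      rw [SimpleGraph.Walk.length_cons, SimpleGraph.dist_comm] at hp
      omega
    omega

end Aux
section MainAux

variable {V : Type} {G : SimpleGraph V} {n : ℕ} {s : Fin n → V} {r : Fin n → ℕ}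
  {H : SimpleGraph (Fin n)} {x : Fin n → Fin n → V}

/-- The metric interval from `a` to `b`. -/
@[reducible] private def Itv (G : SimpleGraph V) (a b : V) : Set V :=
  fun u => G.Reachable a u ∧ G.dist a u + G.dist u b = G.dist a b

/-- The median `x i j` is "forced" to belong to the branch set of `i`. -/
@[reducible] private def Fc (G : SimpleGraph V) (s : Fin n → V) (H : SimpleGraph (Fin n))
    (x : Fin n → Fin n → V) (i j : Fin n) : Prop :=
  x i j = s i ∨ ∃ j', H.Adj i j' ∧ j' ≠ j ∧ x i j ∈ Itv G (s i) (x i j')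

/-- The median `x i j` is assigned to the branch set of `i`. -/
@[reducible] private def Cc (G : SimpleGraph V) (s : Fin n → V) (H : SimpleGraph (Fin n))
    (x : Fin n → Fin n → V) (i j : Fin n) : Prop :=
  Fc G s H x i j ∨ (¬ Fc G s H x j i ∧ i ≤ j)

/-- The branch set of `i`. -/
@[reducible] private def Br (G : SimpleGraph V) (s : Fin n → V) (H : SimpleGraph (Fin n))
    (x : Fin n → Fin n → V) (i : Fin n) : Set V :=
  fun u => u = s i ∨ ∃ j, H.Adj i j ∧ u ∈ Itv G (s i) (x i j) ∧ (u = x i j → Cc G s H x i j)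

private lemma med_facts
    (hmedian : ∀ i j, H.Adj i j → IsMedianVertex G (s i) (r i) (s j) (r j) (x i j))
    {i j : Fin n} (h : H.Adj i j) :
    G.Reachable (s i) (x i j) ∧ G.Reachable (x i j) (s j) ∧
      G.dist (s i) (x i j) + G.dist (x i j) (s j) = G.dist (s i) (s j) ∧
      2 * G.dist (s i) (x i j) + r j ≤ r i + G.dist (s i) (s j) + 1 := by
  obtain ⟨h1, h2, h3, h4⟩ := hmedian i j h
  refine ⟨h1, h2, h3, ?_⟩
  rcases h4 with ⟨hp, -⟩ | ⟨hp, -⟩ <;>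
  · rw [Int.fdiv_eq_ediv_of_nonneg _ (by norm_num)] at hp
    omega

private lemma dist_centers_le
    (hinter : ∀ i j, H.Adj i j → (G.gBall (s i) (r i) ∩ G.gBall (s j) (r j)).Nonempty)
    {i j : Fin n} (h : H.Adj i j) :
    G.dist (s i) (s j) ≤ r i + r j := by
  obtain ⟨w, ⟨hr1, hd1⟩, ⟨hr2, hd2⟩⟩ := hinter i j h
  have ht := dist_tri hr1 hr2.symm
  have hc : G.dist w (s j) = G.dist (s j) w := SimpleGraph.dist_comm
  omega

private lemma pball
    (hmedian : ∀ i j, H.Adj i j → IsMedianVertex G (s i) (r i) (s j) (r j) (x i j))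
    (hinter : ∀ i j, H.Adj i j → (G.gBall (s i) (r i) ∩ G.gBall (s j) (r j)).Nonempty)
    {i j : Fin n} (h : H.Adj i j) : G.dist (s i) (x i j) ≤ r i := by
  obtain ⟨-, -, -, hb⟩ := med_facts hmedian h
  have := dist_centers_le hinter h
  omega

private lemma xnot
    (honly : ∀ i j, H.Adj i j → ∀ k, x i j ∈ G.gBall (s k) (r k) → k = i ∨ k = j)
    {i j : Fin n} (h : H.Adj i j) (k : Fin n) (hki : k ≠ i) (hkj : k ≠ j)
    (hr : G.Reachable (s k) (x i j)) : r k + 1 ≤ G.dist (s k) (x i j) := by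
  by_contra hc
  exact (honly i j h k ⟨hr, by omega⟩).elim hki hkj

private lemma center_not_interior
    (hincomp : ∀ i j : Fin n, i ≠ j → ¬ G.gBall (s i) (r i) ⊂ G.gBall (s j) (r j))
    (hmedian : ∀ i j, H.Adj i j → IsMedianVertex G (s i) (r i) (s j) (r j) (x i j))
    (hinter : ∀ i j, H.Adj i j → (G.gBall (s i) (r i) ∩ G.gBall (s j) (r j)).Nonempty)
    (honly : ∀ i j, H.Adj i j → ∀ k, x i j ∈ G.gBall (s k) (r k) → k = i ∨ k = j)
    {i k l : Fin n} (hkl : H.Adj k l) (hki : k ≠ i) (hli : l ≠ i)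
    (hs : s i ∈ Itv G (s k) (x k l)) : False := by
  obtain ⟨hr, he⟩ := hs
  obtain ⟨hrx, -, -, -⟩ := med_facts hmedian hkl
  have hreach : G.Reachable (s i) (x k l) := hr.symm.trans hrx
  have hxn : r i + 1 ≤ G.dist (s i) (x k l) := xnot honly hkl i (Ne.symm hki) (Ne.symm hli) hreach
  have ha : G.dist (s k) (x k l) ≤ r k := pball hmedian hinter hkl
  apply hincomp i k (Ne.symm hki)
  have hsub : G.gBall (s i) (r i) ⊆ G.gBall (s k) (r k) := by
    rintro w ⟨hwr, hwd⟩
    refine ⟨hr.trans hwr, ?_⟩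
    have := dist_tri hr hwr
    omega
  refine (Set.ssubset_iff_of_subset hsub).2 ⟨x k l, ⟨hrx, ha⟩, ?_⟩
  rintro ⟨-, hle⟩
  omega

private lemma pattern
    (hmedian : ∀ i j, H.Adj i j → IsMedianVertex G (s i) (r i) (s j) (r j) (x i j))
    (hinter : ∀ i j, H.Adj i j → (G.gBall (s i) (r i) ∩ G.gBall (s j) (r j)).Nonempty)
    (honly : ∀ i j, H.Adj i j → ∀ k, x i j ∈ G.gBall (s k) (r k) → k = i ∨ k = j)
    {i j k : Fin n} {u : V} (hij : H.Adj i j) (hki : H.Adj k i) (hkj : k ≠ j)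
    (hu1 : u ∈ Itv G (s i) (x i j)) (hu2 : u ∈ Itv G (s k) (x k i)) :
    u = x k i := by
  obtain ⟨hr1, he1⟩ := hu1
  obtain ⟨hr2, he2⟩ := hu2
  obtain ⟨hrx1, -, -, -⟩ := med_facts hmedian hij
  obtain ⟨hrx2, hrx2', he3, hb⟩ := med_facts hmedian hki
  have hd1 : G.dist (s k) (s i) ≤ G.dist (s k) u + G.dist u (s i) := dist_tri hr2 hr1.symm
  have hru : G.Reachable u (x k i) := hr2.symm.trans hrx2
  have hd2 : G.dist u (s i) ≤ G.dist u (x k i) + G.dist (x k i) (s i) := dist_tri hru hrx2'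
  have hcm : G.dist u (s i) = G.dist (s i) u := SimpleGraph.dist_comm
  have hrkx : G.Reachable (s k) (x i j) := hr2.trans (hr1.symm.trans hrx1)
  have hn : r k + 1 ≤ G.dist (s k) (x i j) := xnot honly hij k hki.ne hkj hrkx
  have ht : G.dist (s k) (x i j) ≤ G.dist (s k) u + G.dist u (x i j) :=
    dist_tri hr2 (hr1.symm.trans hrx1)
  have hai : G.dist (s i) (x i j) ≤ r i := pball hmedian hinter hij
  have hz : G.dist u (x k i) = 0 := by omega
  exact hru.dist_eq_zero_iff.1 hz

private lemma keyA
    (hcenters : Function.Injective s)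
    (hincomp : ∀ i j : Fin n, i ≠ j → ¬ G.gBall (s i) (r i) ⊂ G.gBall (s j) (r j))
    (hxsymm : ∀ i j, x i j = x j i)
    (hmedian : ∀ i j, H.Adj i j → IsMedianVertex G (s i) (r i) (s j) (r j) (x i j))
    (hinter : ∀ i j, H.Adj i j → (G.gBall (s i) (r i) ∩ G.gBall (s j) (r j)).Nonempty)
    (honly : ∀ i j, H.Adj i j → ∀ k, x i j ∈ G.gBall (s k) (r k) → k = i ∨ k = j)
    {i j : Fin n} (hij : H.Adj i j) (h1 : Fc G s H x i j) (h2 : Fc G s H x j i) : False := by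
  rcases h1 with hx1 | ⟨j', hij', hj'j, hm1⟩
  · rcases h2 with hx2 | ⟨l, hjl, hli, hm2⟩
    · exact hij.ne (hcenters (by rw [← hx1, hxsymm i j, hx2]))
    · rw [hxsymm j i, hx1] at hm2
      exact center_not_interior hincomp hmedian hinter honly hjl (Ne.symm hij.ne) hli hm2
  · rcases h2 with hx2 | ⟨l, hjl, hli, hm2⟩
    · rw [show x i j = s j from (hxsymm i j).trans hx2] at hm1
      exact center_not_interior hincomp hmedian hinter honly hij' hij.ne hj'j hm1
    · obtain ⟨hri1, hei1⟩ := hm1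
      obtain ⟨hri2, hei2⟩ := hm2
      rw [hxsymm j i] at hri2 hei2
      obtain ⟨hra, hrb, -, -⟩ := med_facts hmedian hij
      obtain ⟨hra', -, -, -⟩ := med_facts hmedian hij'
      obtain ⟨hra'', -, -, -⟩ := med_facts hmedian hjl
      have hX' : G.Reachable (x i j) (x i j') := hri1.symm.trans hra'
      have hXl : G.Reachable (x i j) (x j l) := hri2.symm.trans hra''
      have hn1 : r j + 1 ≤ G.dist (s j) (x i j') :=
        xnot honly hij' j (Ne.symm hij.ne) (Ne.symm hj'j) (hrb.symm.trans hX')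
      have ht1 : G.dist (s j) (x i j') ≤ G.dist (s j) (x i j) + G.dist (x i j) (x i j') :=
        dist_tri hrb.symm hX'
      have hn2 : r i + 1 ≤ G.dist (s i) (x j l) :=
        xnot honly hjl i hij.ne (Ne.symm hli) (hri1.trans hXl)
      have ht2 : G.dist (s i) (x j l) ≤ G.dist (s i) (x i j) + G.dist (x i j) (x j l) :=
        dist_tri hri1 hXl
      have ha1 : G.dist (s i) (x i j') ≤ r i := pball hmedian hinter hij'
      have ha2 : G.dist (s j) (x j l) ≤ r j := pball hmedian hinter hjl
      omega

private lemma cc_total {i j : Fin n} (hij : H.Adj i j) :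
    Cc G s H x i j ∨ Cc G s H x j i := by
  by_cases h1 : Fc G s H x i j
  · exact Or.inl (Or.inl h1)
  by_cases h2 : Fc G s H x j i
  · exact Or.inr (Or.inl h2)
  rcases le_total i j with h | h
  · exact Or.inl (Or.inr ⟨h2, h⟩)
  · exact Or.inr (Or.inr ⟨h1, h⟩)

private lemma cc_excl
    (hcenters : Function.Injective s)
    (hincomp : ∀ i j : Fin n, i ≠ j → ¬ G.gBall (s i) (r i) ⊂ G.gBall (s j) (r j))
    (hxsymm : ∀ i j, x i j = x j i)
    (hmedian : ∀ i j, H.Adj i j → IsMedianVertex G (s i) (r i) (s j) (r j) (x i j))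
    (hinter : ∀ i j, H.Adj i j → (G.gBall (s i) (r i) ∩ G.gBall (s j) (r j)).Nonempty)
    (honly : ∀ i j, H.Adj i j → ∀ k, x i j ∈ G.gBall (s k) (r k) → k = i ∨ k = j)
    {i j : Fin n} (hij : H.Adj i j) (h1 : Cc G s H x i j) (h2 : Cc G s H x j i) : False := by
  rcases h1 with h1 | ⟨hn1, hle1⟩ <;> rcases h2 with h2 | ⟨hn2, hle2⟩
  · exact keyA hcenters hincomp hxsymm hmedian hinter honly hij h1 h2
  · exact hn2 h1
  · exact hn1 h2
  · exact hij.ne (le_antisymm hle1 hle2)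

end MainAux
section Main2

variable {V : Type} {G : SimpleGraph V} {n : ℕ} {s : Fin n → V} {r : Fin n → ℕ}
  {H : SimpleGraph (Fin n)} {x : Fin n → Fin n → V}

private lemma center_case
    (hcenters : Function.Injective s)
    (hincomp : ∀ i j : Fin n, i ≠ j → ¬ G.gBall (s i) (r i) ⊂ G.gBall (s j) (r j))
    (hxsymm : ∀ i j, x i j = x j i)
    (hmedian : ∀ i j, H.Adj i j → IsMedianVertex G (s i) (r i) (s j) (r j) (x i j))
    (hinter : ∀ i j, H.Adj i j → (G.gBall (s i) (r i) ∩ G.gBall (s j) (r j)).Nonempty)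
    (honly : ∀ i j, H.Adj i j → ∀ k, x i j ∈ G.gBall (s k) (r k) → k = i ∨ k = j)
    {i k l : Fin n} (hik : i ≠ k) (hkl : H.Adj k l)
    (hmem : s i ∈ Itv G (s k) (x k l)) (hkeep : s i = x k l → Cc G s H x k l) : False := by
  by_cases hli : l = i
  · subst hli
    obtain ⟨hr, he⟩ := hmem
    obtain ⟨hrx, hrx', he3, -⟩ := med_facts hmedian hkl
    have hcm : G.dist (s l) (x k l) = G.dist (x k l) (s l) := SimpleGraph.dist_comm
    have hz : G.dist (s l) (x k l) = 0 := by omega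
    have heq : s l = x k l := ((hr.symm.trans hrx).dist_eq_zero_iff).1 hz
    have hF : Fc G s H x l k := Or.inl ((hxsymm l k).trans heq.symm)
    rcases hkeep heq with hFk | ⟨hnF, -⟩
    · exact keyA hcenters hincomp hxsymm hmedian hinter honly hkl.symm hF hFk
    · exact hnF hF
  · exact center_not_interior hincomp hmedian hinter honly hkl (Ne.symm hik) hli hmem

private lemma both_case
    (hcenters : Function.Injective s)
    (hincomp : ∀ i j : Fin n, i ≠ j → ¬ G.gBall (s i) (r i) ⊂ G.gBall (s j) (r j))
    (hxsymm : ∀ i j, x i j = x j i)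
    (hmedian : ∀ i j, H.Adj i j → IsMedianVertex G (s i) (r i) (s j) (r j) (x i j))
    (hinter : ∀ i j, H.Adj i j → (G.gBall (s i) (r i) ∩ G.gBall (s j) (r j)).Nonempty)
    (honly : ∀ i j, H.Adj i j → ∀ k, x i j ∈ G.gBall (s k) (r k) → k = i ∨ k = j)
    {i j k l : Fin n} {u : V} (hik : i ≠ k)
    (hij : H.Adj i j) (hkl : H.Adj k l)
    (hm1 : u ∈ Itv G (s i) (x i j)) (hk1 : u = x i j → Cc G s H x i j)
    (hm2 : u ∈ Itv G (s k) (x k l)) (hk2 : u = x k l → Cc G s H x k l) : False := by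
  by_cases hli : l = i
  · subst hli
    by_cases hkj : k = j
    · -- same edge: u must be the median
      subst hkj
      obtain ⟨hr1, he1⟩ := hm1
      obtain ⟨hr2, he2⟩ := hm2
      rw [hxsymm k l] at he2
      obtain ⟨hra, hrb, hm3, -⟩ := med_facts hmedian hij
      have hcm1 : G.dist u (s k) = G.dist (s k) u := SimpleGraph.dist_comm
      have hcm2 : G.dist (x l k) (s k) = G.dist (s k) (x l k) := SimpleGraph.dist_comm
      have htri : G.dist (s l) (s k) ≤ G.dist (s l) u + G.dist u (s k) :=
        dist_tri hr1 hr2.symm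
      have hz : G.dist u (x l k) = 0 := by omega
      have heq : u = x l k := ((hr1.symm.trans hra).dist_eq_zero_iff).1 hz
      exact cc_excl hcenters hincomp hxsymm hmedian hinter honly hij (hk1 heq)
        (hk2 (heq.trans (hxsymm l k)))
    · -- l = i, k ≠ j : pattern with (i,j,k)
      have heq : u = x k l := pattern hmedian hinter honly hij hkl hkj hm1 hm2
      have hF : Fc G s H x l k :=
        Or.inr ⟨j, hij, fun h => hkj h.symm, by rw [hxsymm l k, ← heq]; exact hm1⟩
      rcases hk2 heq with hFk | ⟨hnF, -⟩
      · exact keyA hcenters hincomp hxsymm hmedian hinter honly hkl.symm hF hFk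
      · exact hnF hF
  · by_cases hkj : k = j
    · subst hkj
      have heq : u = x i k := pattern hmedian hinter honly hkl hij (fun h => hli h.symm) hm2 hm1
      have hF : Fc G s H x k i :=
        Or.inr ⟨l, hkl, hli, by rw [hxsymm k i, ← heq]; exact hm2⟩
      rcases hk1 heq with hFi | ⟨hnF, -⟩
      · exact keyA hcenters hincomp hxsymm hmedian hinter honly hij hFi hF
      · exact hnF hF
    · -- generic case
      obtain ⟨hr1, he1⟩ := hm1
      obtain ⟨hr2, he2⟩ := hm2
      obtain ⟨hrx1, -, -, -⟩ := med_facts hmedian hij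
      obtain ⟨hrx2, -, -, -⟩ := med_facts hmedian hkl
      have hn1 : r k + 1 ≤ G.dist (s k) (x i j) :=
        xnot honly hij k (Ne.symm hik) hkj (hr2.trans (hr1.symm.trans hrx1))
      have ht1 : G.dist (s k) (x i j) ≤ G.dist (s k) u + G.dist u (x i j) :=
        dist_tri hr2 (hr1.symm.trans hrx1)
      have hn2 : r i + 1 ≤ G.dist (s i) (x k l) :=
        xnot honly hkl i hik (fun h => hli h.symm) (hr1.trans (hr2.symm.trans hrx2))
      have ht2 : G.dist (s i) (x k l) ≤ G.dist (s i) u + G.dist u (x k l) :=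
        dist_tri hr1 (hr2.symm.trans hrx2)
      have hb1 : G.dist (s i) (x i j) ≤ r i := pball hmedian hinter hij
      have hb2 : G.dist (s k) (x k l) ≤ r k := pball hmedian hinter hkl
      omega

end Main2
/-- Let `S = {B_i = B_{r_i}(s_i)}_{i ∈ [n]}` be a set of `n` pairwise incomparable
balls in `G` with pairwise distinct centers, and let `H` be a graph on `[n]` each of
whose edges `{i,j}` joins two intersecting balls and is associated with a median vertex
`x i j` of `B_i` and `B_j` such that the only balls of `S` containing `x i j` are `B_i`
and `B_j`. Then `H` is a minor of `G`. -/
theorem minor_of_median_vertices {V : Type} (G : SimpleGraph V) (n : ℕ)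
    (s : Fin n → V) (r : Fin n → ℕ)
    (hcenters : Function.Injective s)
    (hincomp : ∀ i j : Fin n, i ≠ j →
      ¬ G.gBall (s i) (r i) ⊂ G.gBall (s j) (r j))
    (H : SimpleGraph (Fin n)) (x : Fin n → Fin n → V)
    (hxsymm : ∀ i j, x i j = x j i)
    (hinter : ∀ i j, H.Adj i j → (G.gBall (s i) (r i) ∩ G.gBall (s j) (r j)).Nonempty)
    (hmedian : ∀ i j, H.Adj i j → IsMedianVertex G (s i) (r i) (s j) (r j) (x i j))
    (honly : ∀ i j, H.Adj i j → ∀ k, x i j ∈ G.gBall (s k) (r k) → k = i ∨ k = j) :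
    GraphMinor H G := by
  classical
  refine ⟨Br G s H x, ?_, ?_, ?_⟩
  · -- connectivity of branch sets
    intro i
    have hsmem : s i ∈ Br G s H x i := Or.inl rfl
    have key : ∀ m : ℕ, ∀ u, ∀ hu : u ∈ Br G s H x i, G.dist (s i) u ≤ m →
        (G.induce (Br G s H x i)).Reachable ⟨u, hu⟩ ⟨s i, hsmem⟩ := by
      intro m
      induction m with
      | zero =>
        intro u hu hd
        have hu' := hu
        rcases hu' with rfl | ⟨j, hj, ⟨hr, he⟩, hkeep⟩
        · exact SimpleGraph.Reachable.refl _
        · have heq : s i = u := hr.dist_eq_zero_iff.1 (by omega)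
          subst heq
          exact SimpleGraph.Reachable.refl _
      | succ m ih =>
        intro u hu hd
        have hu' := hu
        rcases hu' with rfl | ⟨j, hj, ⟨hr, he⟩, hkeep⟩
        · exact SimpleGraph.Reachable.refl _
        by_cases h0 : G.dist (s i) u = 0
        · have heq : s i = u := hr.dist_eq_zero_iff.1 h0
          subst heq
          exact SimpleGraph.Reachable.refl _
        · obtain ⟨w, hadj, hrw, hdw⟩ := exists_pred hr h0
          obtain ⟨hrxij, -, -, -⟩ := med_facts hmedian hj
          have hru_x : G.Reachable u (x i j) := hr.symm.trans hrxij
          have t1 : G.dist (s i) (x i j) ≤ G.dist (s i) w + G.dist w (x i j) :=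
            dist_tri hrw (hadj.reachable.trans hru_x)
          have t2 : G.dist w (x i j) ≤ G.dist w u + G.dist u (x i j) :=
            dist_tri hadj.reachable hru_x
          have hd1 : G.dist w u = 1 := SimpleGraph.dist_eq_one_iff_adj.mpr hadj
          have hwe : G.dist (s i) w + G.dist w (x i j) = G.dist (s i) (x i j) := by omega
          have hwne : w ≠ x i j := by
            intro hwx
            rw [← hwx] at he
            omega
          have hwmem : w ∈ Br G s H x i :=
            Or.inr ⟨j, hj, ⟨hrw, hwe⟩, fun h => absurd h hwne⟩
          have step : (G.induce (Br G s H x i)).Adj ⟨w, hwmem⟩ ⟨u, hu⟩ := hadj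
          exact (step.reachable.symm).trans (ih w hwmem (by omega))
    rw [SimpleGraph.connected_iff_exists_forall_reachable]
    refine ⟨⟨s i, hsmem⟩, ?_⟩
    rintro ⟨b, hb⟩
    exact (key (G.dist (s i) b) b hb le_rfl).symm
  · -- disjointness
    intro i k hik
    rw [Set.disjoint_left]
    intro u hui huk
    rcases hui with rfl | ⟨j, hij, hm1, hk1⟩
    · rcases huk with heq | ⟨l, hkl, hm2, hk2⟩
      · exact hik (hcenters heq)
      · exact center_case hcenters hincomp hxsymm hmedian hinter honly hik hkl hm2 hk2
    · rcases huk with rfl | ⟨l, hkl, hm2, hk2⟩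
      · exact center_case hcenters hincomp hxsymm hmedian hinter honly (Ne.symm hik) hij hm1 hk1
      · exact both_case hcenters hincomp hxsymm hmedian hinter honly hik hij hkl hm1 hk1 hm2 hk2
  · -- adjacency
    have hAdjCase : ∀ i j, H.Adj i j → Cc G s H x i j →
        ∃ u ∈ Br G s H x i, ∃ v ∈ Br G s H x j, G.Adj u v := by
      intro i j hij hc
      obtain ⟨hra, hrb, -, -⟩ := med_facts hmedian hij
      have hxmem : x i j ∈ Br G s H x i :=
        Or.inr ⟨j, hij, ⟨hra, by rw [SimpleGraph.dist_self, Nat.add_zero]⟩, fun _ => hc⟩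
      have hpos : G.dist (s j) (x i j) ≠ 0 := by
        intro h0
        have heq : s j = x i j := (hrb.symm.dist_eq_zero_iff).1 h0
        have hF : Fc G s H x j i := Or.inl ((hxsymm j i).trans heq.symm)
        rcases hc with hF' | ⟨hn, -⟩
        · exact keyA hcenters hincomp hxsymm hmedian hinter honly hij hF' hF
        · exact hn hF
      obtain ⟨w, hadj, hrw, hdw⟩ := exists_pred hrb.symm hpos
      have hd1 : G.dist w (x i j) = 1 := SimpleGraph.dist_eq_one_iff_adj.mpr hadj
      have hwitv : w ∈ Itv G (s j) (x j i) := by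
        refine ⟨hrw, ?_⟩
        rw [hxsymm j i]
        omega
      have hwne : w ≠ x j i := by
        rw [hxsymm j i]
        intro hwx
        rw [hwx] at hdw
        omega
      have hwmem : w ∈ Br G s H x j :=
        Or.inr ⟨i, hij.symm, hwitv, fun h => absurd h hwne⟩
      exact ⟨x i j, hxmem, w, hwmem, hadj.symm⟩
    intro i j hij
    rcases cc_total hij with hc | hc
    · exact hAdjCase i j hij hc
    · obtain ⟨u, hu, v, hv, hadj⟩ := hAdjCase j i hij.symm hc
      exact ⟨v, hv, u, hu, hadj.symm⟩
end

section
/- Let G be a graph and let S = {B_i = B_{r_i}(s_i)}_{i∈[n]} be a set of n pairwise vertex-disjoint balls in G, and let E_S be a set of pairs {B_i, B_j} ⊆ S, each associated with a ball B_{ij} of G not in S which intersects only B_i and B_j among the balls of S. Then the graph H = (S, E_S) is a minor of G. -/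
namespace BallMinorAux
open SimpleGraph

variable {V : Type} (G : SimpleGraph V)

/-- distance from `v` to a set `A` (junk if empty / unreachable). -/
noncomputable def dA (A : Set V) (v : V) : ℕ := sInf (G.dist v '' A)

lemma dA_le {A : Set V} {w : V} (hw : w ∈ A) (v : V) : dA G A v ≤ G.dist v w :=
  Nat.sInf_le ⟨w, hw, rfl⟩

lemma dA_realizer {A : Set V} (hA : A.Nonempty) (v : V) :
    ∃ w ∈ A, G.dist v w = dA G A v := by
  have := Nat.sInf_mem (s := G.dist v '' A) (hA.image _)
  obtain ⟨w, hw, h⟩ := this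
  exact ⟨w, hw, h⟩

lemma dist_triangle3 {u v w : V} (h1 : G.Reachable u v) (h2 : G.Reachable v w) :
    G.dist u w ≤ G.dist u v + G.dist v w := by
  obtain ⟨p, hp⟩ := h1.exists_walk_length_eq_dist
  obtain ⟨q, hq⟩ := h2.exists_walk_length_eq_dist
  calc G.dist u w ≤ (p.append q).length := G.dist_le _
    _ = _ := by rw [SimpleGraph.Walk.length_append, hp, hq]

lemma mid_dist {a b u : V} [DecidableEq V] (p : G.Walk a b) (hu : u ∈ p.support) :
    G.dist a u + G.dist u b ≤ p.length := by
  have hspec := p.take_spec hu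
  have : (p.takeUntil u hu).length + (p.dropUntil u hu).length = p.length := by
    rw [← SimpleGraph.Walk.length_append, hspec]
  calc G.dist a u + G.dist u b
      ≤ (p.takeUntil u hu).length + (p.dropUntil u hu).length :=
        Nat.add_le_add (G.dist_le _) (G.dist_le _)
    _ = p.length := this

lemma peel {u w : V} (h : G.Reachable u w) (hne : u ≠ w) :
    ∃ v, G.Adj u v ∧ G.dist v w + 1 = G.dist u w := by
  obtain ⟨p, hp⟩ := h.exists_walk_length_eq_dist
  cases p with
  | nil => exact absurd rfl hne
  | @cons _ v _ hadj q =>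
    refine ⟨v, hadj, ?_⟩
    have h1 : G.dist v w ≤ q.length := G.dist_le q
    obtain ⟨q', hq'⟩ := (Walk.reachable q).exists_walk_length_eq_dist
    have h2 : G.dist u w ≤ G.dist v w + 1 := by
      calc G.dist u w ≤ (Walk.cons hadj q').length := G.dist_le _
        _ = G.dist v w + 1 := by simp [SimpleGraph.Walk.length_cons, hq']
    have h3 : q.length + 1 = G.dist u w := by simpa [SimpleGraph.Walk.length_cons] using hp
    omega

lemma induce_reachable {S : Set V} {a b : V} (p : G.Walk a b)
    (hp : ∀ v ∈ p.support, v ∈ S) (ha : a ∈ S) (hb : b ∈ S) :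
    (G.induce S).Reachable ⟨a, ha⟩ ⟨b, hb⟩ := by
  induction p with
  | nil => rfl
  | @cons u v w hadj q ih =>
    have hv : v ∈ S := hp v (by simp)
    have hstep : (G.induce S).Adj ⟨u, ha⟩ ⟨v, hv⟩ := hadj
    exact hstep.reachable.trans (ih (fun z hz => hp z (by simp [hz])) hv hb)

lemma cross {A B : Set V} (hAB : Disjoint A B) {a b : V} (p : G.Walk a b)
    (hp : ∀ v ∈ p.support, v ∈ A ∪ B) (ha : a ∈ A) (hb : b ∈ B) :
    ∃ u ∈ A, ∃ v ∈ B, G.Adj u v := by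
  induction p with
  | nil => exact absurd hb (Set.disjoint_left.mp hAB ha)
  | @cons u v w hadj q ih =>
    rcases hp v (by simp) with hv | hv
    · exact ih (fun z hz => hp z (by simp [hz])) hv hb
    · exact ⟨u, ha, v, hv, hadj⟩

lemma self_mem_gBall (s : V) (r : ℕ) : s ∈ G.gBall s r :=
  ⟨Reachable.refl _, by simp [SimpleGraph.dist_self]⟩

lemma reachable_of_mem_gBall {s u : V} {r : ℕ} (h : u ∈ G.gBall s r) : G.Reachable s u := h.1


variable {n : ℕ} (s : Fin n → V) (r : Fin n → ℕ)

/-- the given balls -/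
def Bb (i : Fin n) : Set V := G.gBall (s i) (r i)

/-- distance to the `i`-th ball -/
noncomputable def db (i : Fin n) (v : V) : ℕ := dA G (Bb G s r i) v

/-- `v` prefers ball `i` over ball `k` -/
def Vpref (i k : Fin n) (v : V) : Prop :=
  (¬ G.Reachable v (s k)) ∨ db G s r i v < db G s r k v ∨
    (db G s r i v = db G s r k v ∧ i < k)

/-- the Voronoi cell of ball `i` among non-ball vertices -/
def cell (i : Fin n) : Set V :=
  {v | G.Reachable v (s i) ∧ (∀ m, v ∉ Bb G s r m) ∧ ∀ k, k ≠ i → Vpref G s r i k v}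

/-- the branch sets of the minor model -/
def brb (i : Fin n) : Set V := Bb G s r i ∪ cell G s r i

variable {G s r}

lemma s_mem_Bb (i : Fin n) : s i ∈ Bb G s r i := self_mem_gBall G _ _

lemma Bb_nonempty (i : Fin n) : (Bb G s r i).Nonempty := ⟨s i, s_mem_Bb i⟩

lemma db_le {i : Fin n} {w : V} (hw : w ∈ Bb G s r i) (v : V) :
    db G s r i v ≤ G.dist v w := dA_le G hw v

lemma db_realizer (i : Fin n) (v : V) :
    ∃ w ∈ Bb G s r i, G.dist v w = db G s r i v := dA_realizer G (Bb_nonempty i) v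

lemma reach_of_Bb {i : Fin n} {w : V} (hw : w ∈ Bb G s r i) : G.Reachable (s i) w := hw.1

lemma mem_Bb_of_db_zero {i : Fin n} {v : V} (hv : G.Reachable v (s i))
    (h : db G s r i v = 0) : v ∈ Bb G s r i := by
  obtain ⟨w, hw, hdw⟩ := db_realizer (G := G) (s := s) (r := r) i v
  have hr : G.Reachable v w := hv.trans (reach_of_Bb hw)
  have : v = w := (hr.dist_eq_zero_iff).mp (by omega)
  exact this ▸ hw

lemma db_pos_of_not_mem {i : Fin n} {v : V} (hv : G.Reachable v (s i))
    (h : v ∉ Bb G s r i) : 0 < db G s r i v := by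
  rcases Nat.eq_zero_or_pos (db G s r i v) with h0 | h0
  · exact absurd (mem_Bb_of_db_zero hv h0) h
  · exact h0

lemma db_lip {i : Fin n} {v v' : V} (h1 : G.Reachable v v') (h2 : G.Reachable v' (s i)) :
    db G s r i v ≤ G.dist v v' + db G s r i v' := by
  obtain ⟨w, hw, hdw⟩ := db_realizer (G := G) (s := s) (r := r) i v'
  have hr2 : G.Reachable v' w := h2.trans (reach_of_Bb hw)
  calc db G s r i v ≤ G.dist v w := db_le hw v
    _ ≤ G.dist v v' + G.dist v' w := dist_triangle3 G h1 hr2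
    _ = G.dist v v' + db G s r i v' := by rw [hdw]

lemma ball_reach (i : Fin n) : ∀ (N : ℕ) (v : V) (hv : v ∈ Bb G s r i),
    G.dist (s i) v ≤ N →
    (G.induce (brb G s r i)).Reachable ⟨v, Or.inl hv⟩ ⟨s i, Or.inl (s_mem_Bb i)⟩ := by
  intro N
  induction N with
  | zero =>
    intro v hv h0
    have : s i = v := ((reach_of_Bb hv).dist_eq_zero_iff).mp (by omega)
    subst this
    rfl
  | succ N ih =>
    intro v hv hN
    by_cases hvs : v = s i
    · subst hvs; rfl
    · obtain ⟨v', hadj, hdist⟩ := peel G ((reach_of_Bb hv).symm) hvs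
      have hd : G.dist (s i) v' + 1 = G.dist (s i) v := by
        rw [SimpleGraph.dist_comm (u := s i) (v := v'), SimpleGraph.dist_comm (u := s i) (v := v)]
        exact hdist
      have hv' : v' ∈ Bb G s r i := by
        refine ⟨(reach_of_Bb hv).trans hadj.reachable, ?_⟩
        have := hv.2
        omega
      have step : (G.induce (brb G s r i)).Adj ⟨v, Or.inl hv⟩ ⟨v', Or.inl hv'⟩ := hadj
      exact step.reachable.trans (ih v' hv' (by omega))

lemma cell_reach (hdisj : ∀ i j : Fin n, i ≠ j →
      Disjoint (G.gBall (s i) (r i)) (G.gBall (s j) (r j))) (i : Fin n) :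
    ∀ (N : ℕ) (v : V) (hv : v ∈ cell G s r i), db G s r i v ≤ N →
    (G.induce (brb G s r i)).Reachable ⟨v, Or.inr hv⟩ ⟨s i, Or.inl (s_mem_Bb i)⟩ := by
  intro N
  induction N with
  | zero =>
    intro v hv h0
    exact absurd (mem_Bb_of_db_zero hv.1 (by omega)) (hv.2.1 i)
  | succ N ih =>
    intro v hv hN
    have hpos : 0 < db G s r i v := db_pos_of_not_mem hv.1 (hv.2.1 i)
    obtain ⟨w, hw, hdw⟩ := db_realizer (G := G) (s := s) (r := r) i v
    have hrvw : G.Reachable v w := hv.1.trans (reach_of_Bb hw)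
    have hvw : v ≠ w := by
      intro h; subst h; exact absurd hw (hv.2.1 i)
    obtain ⟨v', hadj, hdist⟩ := peel G hrvw hvw
    -- dist v' w + 1 = dist v w = db i v
    have hrv' : G.Reachable v' (s i) := hadj.symm.reachable.trans hv.1
    have hdbv' : db G s r i v' = db G s r i v - 1 := by
      have h1 : db G s r i v' ≤ db G s r i v - 1 := by
        have := db_le (G := G) (s := s) (r := r) hw v'
        omega
      have h2 : db G s r i v ≤ 1 + db G s r i v' := by
        have hle := db_lip (G := G) (s := s) (r := r) hadj.reachable hrv'
        have : G.dist v v' ≤ 1 := G.dist_le (Walk.cons hadj Walk.nil)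
        omega
      omega
    -- case analysis on v'
    by_cases hball : ∃ m, v' ∈ Bb G s r m
    · obtain ⟨m, hm⟩ := hball
      have hmi : m = i := by
        by_contra hmi
        have hpref := hv.2.2 m (by simpa using hmi)
        have hreachm : G.Reachable v (s m) := hadj.reachable.trans (reach_of_Bb hm).symm
        have hdmv : db G s r m v ≤ 1 := by
          have := db_le (G := G) (s := s) (r := r) hm v
          have : G.dist v v' ≤ 1 := G.dist_le (Walk.cons hadj Walk.nil)
          have := db_le (G := G) (s := s) (r := r) hm v
          calc db G s r m v ≤ G.dist v v' := db_le hm v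
            _ ≤ 1 := G.dist_le (Walk.cons hadj Walk.nil)
        rcases hpref with h | h | ⟨heq, _⟩
        · exact h hreachm
        · -- db i v < db m v ≤ 1 so db i v = 0
          omega
        · -- db i v = db m v ≤ 1, and db i v ≥ 1, so db i v = 1, so dist v' w = 0
          have hdb1 : db G s r i v = 1 := by omega
          have : G.dist v' w = 0 := by omega
          have hrv'w : G.Reachable v' w := hadj.symm.reachable.trans hrvw
          have : v' = w := (hrv'w.dist_eq_zero_iff).mp this
          subst this
          exact Set.disjoint_left.mp (hdisj m i hmi) hm hw
      have hm' : v' ∈ Bb G s r i := hmi ▸ hm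
      have step : (G.induce (brb G s r i)).Adj ⟨v, Or.inr hv⟩ ⟨v', Or.inl hm'⟩ := hadj
      refine step.reachable.trans (ball_reach i (G.dist (s i) v') v' hm' le_rfl)
    · push_neg at hball
      have hv'cell : v' ∈ cell G s r i := by
        refine ⟨hrv', hball, ?_⟩
        intro k hk
        rcases hv.2.2 k hk with h | h | ⟨heq, hlt⟩
        · exact Or.inl (fun hre => h (hadj.reachable.trans hre))
        · -- strict: db k v' ≥ db k v - 1 > db i v - 1 = db i v'
          by_cases hrk : G.Reachable v' (s k)
          · right
            have hlk : db G s r k v ≤ 1 + db G s r k v' := by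
              have hle := db_lip (G := G) (s := s) (r := r) hadj.reachable hrk
              have : G.dist v v' ≤ 1 := G.dist_le (Walk.cons hadj Walk.nil)
              omega
            rcases Nat.lt_or_ge (db G s r i v') (db G s r k v') with hc | hc
            · exact Or.inl hc
            · -- db k v' ≤ db i v' = db i v - 1, then db k v ≤ db i v, contradiction w/ strict
              omega
          · exact Or.inl hrk
        · -- tie with i < k
          by_cases hrk : G.Reachable v' (s k)
          · right
            have hlk : db G s r k v ≤ 1 + db G s r k v' := by
              have hle := db_lip (G := G) (s := s) (r := r) hadj.reachable hrk
              have : G.dist v v' ≤ 1 := G.dist_le (Walk.cons hadj Walk.nil)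
              omega
            rcases Nat.lt_or_ge (db G s r i v') (db G s r k v') with hc | hc
            · exact Or.inl hc
            · have : db G s r i v' = db G s r k v' := by omega
              exact Or.inr ⟨this, hlt⟩
          · exact Or.inl hrk
      have step : (G.induce (brb G s r i)).Adj ⟨v, Or.inr hv⟩ ⟨v', Or.inr hv'cell⟩ := hadj
      exact step.reachable.trans (ih v' hv'cell (by omega))

lemma brb_connected (hdisj : ∀ i j : Fin n, i ≠ j →
      Disjoint (G.gBall (s i) (r i)) (G.gBall (s j) (r j))) (i : Fin n) :
    (G.induce (brb G s r i)).Connected := by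
  rw [SimpleGraph.connected_iff]
  constructor
  · intro a b
    have key : ∀ c : brb G s r i,
        (G.induce (brb G s r i)).Reachable c ⟨s i, Or.inl (s_mem_Bb i)⟩ := by
      rintro ⟨c, hc | hc⟩
      · exact ball_reach i (G.dist (s i) c) c hc le_rfl
      · exact cell_reach hdisj i (db G s r i c) c hc le_rfl
    exact (key a).trans (key b).symm
  · exact ⟨⟨s i, Or.inl (s_mem_Bb i)⟩⟩

lemma brb_disjoint (hdisj : ∀ i j : Fin n, i ≠ j →
      Disjoint (G.gBall (s i) (r i)) (G.gBall (s j) (r j))) :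
    Pairwise fun i j => Disjoint (brb G s r i) (brb G s r j) := by
  intro i j hij
  rw [Set.disjoint_left]
  rintro v (hv | hv) (hw | hw)
  · exact Set.disjoint_left.mp (hdisj i j hij) hv hw
  · exact hw.2.1 i hv
  · exact hv.2.1 j hw
  · rcases hv.2.2 j (Ne.symm hij) with h1 | h1 | ⟨he1, hl1⟩ <;>
      rcases hw.2.2 i hij with h2 | h2 | ⟨he2, hl2⟩
    · exact h1 hw.1
    · exact h1 hw.1
    · exact h1 hw.1
    · exact h2 hv.1
    · omega
    · omega
    · exact h2 hv.1
    · omega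
    · exact absurd hl1 (not_lt.mpr hl2.le)

lemma support_key {a : Fin n} {c w' u : V} (hw' : w' ∈ Bb G s r a)
    (p : G.Walk c w') (hp : p.length = db G s r a c) (hu : u ∈ p.support) :
    G.Reachable c u ∧ G.dist c u + db G s r a u ≤ db G s r a c := by
  classical
  refine ⟨⟨p.takeUntil u hu⟩, ?_⟩
  have h1 := mid_dist G p hu
  have h2 : db G s r a u ≤ G.dist u w' := db_le hw' u
  omega

lemma side_mem {a b : Fin n} (hab : a ≠ b) {c : V} {R : ℕ}
    (hXa : (G.gBall c R ∩ Bb G s r a).Nonempty)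
    (hXb : (G.gBall c R ∩ Bb G s r b).Nonempty)
    (hXk : ∀ k, k ≠ a → k ≠ b → ∀ w ∈ Bb G s r k, w ∉ G.gBall c R)
    {u : V} (hru : G.Reachable c u)
    (hkey : G.dist c u + db G s r a u ≤ db G s r a c) :
    u ∈ brb G s r a ∪ brb G s r b := by
  obtain ⟨wa, hwaX, hwaB⟩ := hXa
  obtain ⟨wb, hwbX, hwbB⟩ := hXb
  have hca : G.Reachable c (s a) := hwaX.1.trans (reach_of_Bb hwaB).symm
  have hcb : G.Reachable c (s b) := hwbX.1.trans (reach_of_Bb hwbB).symm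
  have hRa : db G s r a c ≤ R := le_trans (db_le hwaB c) hwaX.2
  have huX : u ∈ G.gBall c R := ⟨hru, by omega⟩
  by_cases hball : ∃ m, u ∈ Bb G s r m
  · obtain ⟨m, hm⟩ := hball
    by_cases hma : m = a
    · exact Or.inl (Or.inl (hma ▸ hm))
    · by_cases hmb : m = b
      · exact Or.inr (Or.inl (hmb ▸ hm))
      · exact absurd huX (hXk m hma hmb u hm)
  · push_neg at hball
    have hrua : G.Reachable u (s a) := hru.symm.trans hca
    have hrub : G.Reachable u (s b) := hru.symm.trans hcb
    have key : ∀ k, k ≠ a → k ≠ b → G.Reachable u (s k) →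
        db G s r a u < db G s r k u := by
      intro k hk1 hk2 hrk
      obtain ⟨wk, hwkB, hwkd⟩ := db_realizer (G := G) (s := s) (r := r) k u
      have hwknX : wk ∉ G.gBall c R := hXk k hk1 hk2 wk hwkB
      have hrcwk : G.Reachable c wk := hru.trans (hrk.trans (reach_of_Bb hwkB))
      have hdcwk : R < G.dist c wk := by
        by_contra h
        exact hwknX ⟨hrcwk, by omega⟩
      have htri : G.dist c wk ≤ G.dist c u + G.dist u wk :=
        dist_triangle3 G hru (hrk.trans (reach_of_Bb hwkB))
      omega
    have hcellgen : ∀ a' b' : Fin n, (a' = a ∧ b' = b) ∨ (a' = b ∧ b' = a) →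
        (db G s r a' u < db G s r b' u ∨
          (db G s r a' u = db G s r b' u ∧ a' < b')) →
        u ∈ cell G s r a' := by
      rintro a' b' hor hwin
      have hra' : G.Reachable u (s a') := by
        rcases hor with ⟨h1, _⟩ | ⟨h1, _⟩ <;> subst h1 <;> assumption
      refine ⟨hra', hball, ?_⟩
      intro k hk
      by_cases hkb : k = b'
      · subst hkb; exact Or.inr hwin
      · by_cases hrk : G.Reachable u (s k)
        · have hk1 : k ≠ a ∧ k ≠ b := by
            rcases hor with ⟨h1, h2⟩ | ⟨h1, h2⟩ <;> subst h1 <;> subst h2 <;>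
              exact ⟨by tauto, by tauto⟩
          have hstrict := key k hk1.1 hk1.2 hrk
          have hle : db G s r a' u ≤ db G s r a u := by
            rcases hor with ⟨h1, h2⟩ | ⟨h1, h2⟩
            · subst h1; exact le_rfl
            · subst h1; subst h2
              rcases hwin with h | ⟨h, _⟩
              · exact le_of_lt h
              · exact le_of_eq h
          exact Or.inr (Or.inl (lt_of_le_of_lt hle hstrict))
        · exact Or.inl hrk
    rcases Nat.lt_trichotomy (db G s r a u) (db G s r b u) with h | h | h
    · exact Or.inl (Or.inr (hcellgen a b (Or.inl ⟨rfl, rfl⟩) (Or.inl h)))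
    · rcases lt_or_gt_of_ne hab with hl | hl
      · exact Or.inl (Or.inr (hcellgen a b (Or.inl ⟨rfl, rfl⟩) (Or.inr ⟨h, hl⟩)))
      · exact Or.inr (Or.inr (hcellgen b a (Or.inr ⟨rfl, rfl⟩) (Or.inr ⟨h.symm, hl⟩)))
    · exact Or.inr (Or.inr (hcellgen b a (Or.inr ⟨rfl, rfl⟩) (Or.inl h)))

end BallMinorAux

/-- Let `S = {B_i = B_{r_i}(s_i)}_{i ∈ [n]}` be a set of `n` pairwise vertex-disjoint
balls in `G`, and let `H` be a graph on `[n]` each of whose edges `{i,j}` is associated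
with a ball `B_{ij} = B_{ρ i j}(x i j)` of `G` not in `S` which intersects only `B_i`
and `B_j` among the balls of `S`. Then `H` is a minor of `G`. -/
theorem minor_of_linking_balls {V : Type} (G : SimpleGraph V) (n : ℕ)
    (s : Fin n → V) (r : Fin n → ℕ)
    (hdisj : ∀ i j : Fin n, i ≠ j →
      Disjoint (G.gBall (s i) (r i)) (G.gBall (s j) (r j)))
    (H : SimpleGraph (Fin n)) (x : Fin n → Fin n → V) (ρ : Fin n → Fin n → ℕ)
    (hxsymm : ∀ i j, x i j = x j i) (hρsymm : ∀ i j, ρ i j = ρ j i)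
    (hnotin : ∀ i j, H.Adj i j → ∀ k : Fin n,
      G.gBall (x i j) (ρ i j) ≠ G.gBall (s k) (r k))
    (hinter : ∀ i j, H.Adj i j → ∀ k : Fin n,
      (G.gBall (x i j) (ρ i j) ∩ G.gBall (s k) (r k)).Nonempty ↔ (k = i ∨ k = j)) :
    GraphMinor H G := by
  classical
  open BallMinorAux in
  refine ⟨brb G s r, fun i => brb_connected hdisj i, brb_disjoint hdisj, ?_⟩
  intro i j hij
  have hne : i ≠ j := hij.ne
  set c := x i j with hc
  set R := ρ i j with hR
  have hXi : (G.gBall c R ∩ BallMinorAux.Bb G s r i).Nonempty :=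
    (hinter i j hij i).2 (Or.inl rfl)
  have hXj : (G.gBall c R ∩ BallMinorAux.Bb G s r j).Nonempty :=
    (hinter i j hij j).2 (Or.inr rfl)
  have hXk : ∀ k, k ≠ i → k ≠ j → ∀ w ∈ BallMinorAux.Bb G s r k, w ∉ G.gBall c R := by
    intro k hk1 hk2 w hw hwX
    rcases (hinter i j hij k).1 ⟨w, hwX, hw⟩ with h | h
    · exact hk1 h
    · exact hk2 h
  have hXi' := hXi
  have hXj' := hXj
  obtain ⟨wa0, hwa0X, hwa0B⟩ := hXi
  obtain ⟨wb0, hwb0X, hwb0B⟩ := hXj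
  have hca : G.Reachable c (s i) := hwa0X.1.trans (BallMinorAux.reach_of_Bb hwa0B).symm
  have hcb : G.Reachable c (s j) := hwb0X.1.trans (BallMinorAux.reach_of_Bb hwb0B).symm
  obtain ⟨wi, hwiB, hwid⟩ := BallMinorAux.db_realizer (G := G) (s := s) (r := r) i c
  obtain ⟨wj, hwjB, hwjd⟩ := BallMinorAux.db_realizer (G := G) (s := s) (r := r) j c
  have hrcwi : G.Reachable c wi := hca.trans (BallMinorAux.reach_of_Bb hwiB)
  have hrcwj : G.Reachable c wj := hcb.trans (BallMinorAux.reach_of_Bb hwjB)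
  obtain ⟨p, hp⟩ := hrcwi.exists_walk_length_eq_dist
  obtain ⟨q, hq⟩ := hrcwj.exists_walk_length_eq_dist
  have hp' : p.length = BallMinorAux.db G s r i c := by rw [hp, hwid]
  have hq' : q.length = BallMinorAux.db G s r j c := by rw [hq, hwjd]
  have hsupp : ∀ u ∈ (p.reverse.append q).support,
      u ∈ BallMinorAux.brb G s r i ∪ BallMinorAux.brb G s r j := by
    intro u hu
    rw [SimpleGraph.Walk.mem_support_append_iff] at hu
    rcases hu with hu | hu
    · rw [SimpleGraph.Walk.support_reverse, List.mem_reverse] at hu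
      obtain ⟨hru, hkey⟩ := BallMinorAux.support_key hwiB p hp' hu
      exact BallMinorAux.side_mem hne hXi' hXj' hXk hru hkey
    · obtain ⟨hru, hkey⟩ := BallMinorAux.support_key hwjB q hq' hu
      have := BallMinorAux.side_mem hne.symm hXj' hXi'
        (fun k hk1 hk2 => hXk k hk2 hk1) hru hkey
      exact this.symm
  have hdisjij : Disjoint (BallMinorAux.brb G s r i) (BallMinorAux.brb G s r j) :=
    BallMinorAux.brb_disjoint hdisj hne
  exact BallMinorAux.cross G hdisjij (p.reverse.append q) hsupp
    (Or.inl hwiB) (Or.inl hwjB)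
end

section
/- Let 𝓗 = (V, 𝓔) be a multi-hypergraph of rank at most k ≥ 2 on n vertices, and let E ⊆ (V choose 2) be a set of pairs of vertices {u,v} such that for each pair there exists an edge e_{uv} of 𝓗 containing both u and v (possibly e_{uv} = e_{xy} for distinct pairs). Then the graph (V, E) contains a subgraph H such that ad(H) ≥ 2|E|/(n·e·k) and, for every edge uv of H, the corresponding edge e_{uv} of 𝓗 contains no vertex of V(H) other than u and v, where e is the base of the natural logarithm. -/
open Finset
section
variable {V : Type} [Fintype V] [DecidableEq V]

/-- Weighted counting: the total weight of sets containing `B` and disjoint from `C`. -/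
lemma sum_weight_cond (p q : ℝ) (hpq : p + q = 1) (B C : Finset V) (hd : Disjoint B C) :
    ∑ W ∈ (univ : Finset V).powerset,
      (if B ⊆ W ∧ Disjoint C W then p ^ W.card * q ^ (Fintype.card V - W.card) else 0)
      = p ^ B.card * q ^ C.card := by
  have key := Finset.prod_add (fun v : V => if v ∈ C then (0:ℝ) else p)
      (fun v : V => if v ∈ B then (0:ℝ) else q) univ
  have hL : ∏ v ∈ (univ : Finset V),
      ((if v ∈ C then (0:ℝ) else p) + (if v ∈ B then (0:ℝ) else q))
      = p ^ B.card * q ^ C.card := by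
    have hsub : B ∪ C ⊆ (univ : Finset V) := subset_univ _
    rw [← Finset.prod_sdiff hsub]
    have h1 : ∏ v ∈ (univ \ (B ∪ C)),
        ((if v ∈ C then (0:ℝ) else p) + (if v ∈ B then (0:ℝ) else q)) = 1 := by
      apply Finset.prod_eq_one
      intro v hv
      simp only [mem_sdiff, mem_union] at hv
      rw [if_neg (fun h => hv.2 (Or.inr h)), if_neg (fun h => hv.2 (Or.inl h)), hpq]
    have h2 : ∏ v ∈ B ∪ C,
        ((if v ∈ C then (0:ℝ) else p) + (if v ∈ B then (0:ℝ) else q))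
        = p ^ B.card * q ^ C.card := by
      rw [Finset.prod_union (disjoint_left.mpr fun a ha hb => disjoint_left.mp hd ha hb)]
      congr 1
      · rw [Finset.prod_congr rfl (fun v hv => ?_), Finset.prod_const]
        rw [if_neg (disjoint_left.mp hd hv), if_pos hv, add_zero]
      · rw [Finset.prod_congr rfl (fun v hv => ?_), Finset.prod_const]
        rw [if_pos hv, if_neg (disjoint_right.mp hd hv), zero_add]
    rw [h1, h2, one_mul]
  rw [hL] at key
  rw [key]
  apply Finset.sum_congr rfl
  intro W hW
  by_cases hC : Disjoint C W
  · by_cases hB : B ⊆ W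
    · rw [if_pos ⟨hB, hC⟩]
      have e1 : ∏ v ∈ W, (if v ∈ C then (0:ℝ) else p) = p ^ W.card := by
        rw [Finset.prod_congr rfl (fun v hv => if_neg (disjoint_right.mp hC hv)),
          Finset.prod_const]
      have e2 : ∏ v ∈ (univ \ W), (if v ∈ B then (0:ℝ) else q)
          = q ^ (Fintype.card V - W.card) := by
        rw [Finset.prod_congr rfl (fun v hv => if_neg (fun h => (mem_sdiff.mp hv).2 (hB h))),
          Finset.prod_const, card_sdiff_of_subset (subset_univ W), card_univ]
      rw [e1, e2]
    · rw [if_neg (fun h => hB h.1)]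
      obtain ⟨v, hvB, hvW⟩ := not_subset.mp hB
      symm
      apply mul_eq_zero_of_right
      exact Finset.prod_eq_zero (mem_sdiff.mpr ⟨mem_univ v, hvW⟩) (if_pos hvB)
  · rw [if_neg (fun h => hC h.2)]
    obtain ⟨v, hvC, hvW⟩ := Finset.not_disjoint_iff.mp hC
    symm
    apply mul_eq_zero_of_left
    exact Finset.prod_eq_zero hvW (if_pos hvC)

end

lemma exp_neg_one_le (k : ℕ) (hk : 2 ≤ k) :
    Real.exp (-1) ≤ (1 - (k : ℝ)⁻¹) ^ (k - 2) := by
  rcases eq_or_lt_of_le hk with h | h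
  · rw [← h]
    norm_num
  · have hk3 : 3 ≤ k := h
    set m : ℕ := k - 2 with hm
    have hm1 : 1 ≤ m := by omega
    have hmR : (1:ℝ) ≤ (m:ℝ) := by exact_mod_cast hm1
    have hmpos : (0:ℝ) < m := by linarith
    set t : ℝ := (m : ℝ)⁻¹ with ht
    have htpos : 0 < t := by positivity
    have h1 : Real.exp (-1) = (Real.exp (-t)) ^ m := by
      rw [← Real.exp_nat_mul]
      congr 1
      rw [ht]
      have := mul_inv_cancel₀ (ne_of_gt hmpos)
      linarith [mul_neg (m:ℝ) ((m:ℝ)⁻¹)]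
    have h2 : Real.exp (-t) ≤ (1 + t)⁻¹ := by
      rw [Real.exp_neg]
      exact inv_anti₀ (by linarith) (by linarith [Real.add_one_le_exp t])
    have hkR : (m:ℝ) = (k:ℝ) - 2 := by
      have : (m:ℕ) + 2 = k := by omega
      have := congrArg (fun n : ℕ => (n:ℝ)) this
      push_cast at this
      linarith
    have hkpos : (0:ℝ) < k := by positivity
    have hk2 : (1:ℝ) ≤ (k:ℝ) - 2 := by
      rw [← hkR]; exact hmR
    have h3 : (1 + t)⁻¹ ≤ 1 - (k:ℝ)⁻¹ := by
      have e1 : (1 + t)⁻¹ = ((k:ℝ) - 2)/((k:ℝ) - 1) := by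
        rw [ht, hkR]
        have hne1 : (k:ℝ) - 2 ≠ 0 := by linarith
        have hne2 : (k:ℝ) - 1 ≠ 0 := by linarith
        field_simp
        ring
      have e2 : 1 - (k:ℝ)⁻¹ = ((k:ℝ) - 1)/(k:ℝ) := by
        field_simp
      rw [e1, e2, div_le_div_iff₀ (by linarith) (by linarith)]
      nlinarith
    rw [h1]
    apply pow_le_pow_left₀ (Real.exp_nonneg _)
    linarith

def privGraph {V : Type} (GE : SimpleGraph V) (ed : V → V → Finset V)
    (hsymm : ∀ u v, ed u v = ed v u) (W : Finset V) : SimpleGraph V where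
  Adj u v := GE.Adj u v ∧ u ∈ W ∧ v ∈ W ∧ ∀ x ∈ W, x ∈ ed u v → x = u ∨ x = v
  symm := by
    constructor
    rintro u v ⟨h1, h2, h3, h4⟩
    refine ⟨h1.symm, h3, h2, fun x hx hxe => ?_⟩
    rw [hsymm v u] at hxe
    exact (h4 x hx hxe).symm
  loopless := ⟨fun v h => GE.loopless.irrefl v h.1⟩

lemma privGraph_adj {V : Type} (GE : SimpleGraph V) (ed : V → V → Finset V)
    (hsymm : ∀ u v, ed u v = ed v u) (W : Finset V) (u v : V) :
    (privGraph GE ed hsymm W).Adj u v ↔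
      (GE.Adj u v ∧ u ∈ W ∧ v ∈ W ∧ ∀ x ∈ W, x ∈ ed u v → x = u ∨ x = v) := Iff.rfl

lemma privGraph_le {V : Type} (GE : SimpleGraph V) (ed : V → V → Finset V)
    (hsymm : ∀ u v, ed u v = ed v u) (W : Finset V) :
    privGraph GE ed hsymm W ≤ GE := fun _ _ h => h.1


set_option maxHeartbeats 2000000 in
/-- Let `𝓔` be a multi-hypergraph of rank at most `k ≥ 2` on the `n`-element vertex
set `V`, and let the edges of the graph `GE` on `V` be pairs `{u,v}` for which a chosen
edge `ed u v` of `𝓔` contains both `u` and `v` (the chosen edges may coincide for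
different pairs). Then `(V, GE)` contains a subgraph `H`, with vertex set `W` and edge
set `E(H)`, such that `ad(H) = 2|E(H)|/|W| ≥ 2|E(GE)|/(n·e·k)` and, for every edge `uv`
of `H`, the edge `ed u v` of `𝓔` contains no vertex of `W` other than `u` and `v`. -/
theorem exists_dense_subgraph_with_private_edges {V : Type} [Fintype V]
    (k : ℕ) (hk : 2 ≤ k)
    (𝓔 : Multiset (Finset V)) (hrank : ∀ e ∈ 𝓔, e.card ≤ k)
    (GE : SimpleGraph V) (ed : V → V → Finset V)
    (hsymm : ∀ u v, ed u v = ed v u)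
    (hmem : ∀ u v, GE.Adj u v → ed u v ∈ 𝓔)
    (hin : ∀ u v, GE.Adj u v → u ∈ ed u v ∧ v ∈ ed u v) :
    ∃ (W : Finset V) (H : SimpleGraph V),
      H ≤ GE ∧
      (∀ u v, H.Adj u v → u ∈ W ∧ v ∈ W) ∧
      2 * (H.edgeSet.ncard : ℝ) / (W.card : ℝ) ≥
        2 * (GE.edgeSet.ncard : ℝ) / ((Fintype.card V : ℝ) * Real.exp 1 * (k : ℝ)) ∧
      (∀ u v, H.Adj u v → ∀ w ∈ W, w ∈ ed u v → w = u ∨ w = v) := by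
  classical
  by_cases hE0 : GE.edgeSet.ncard = 0
  · refine ⟨∅, ⊥, bot_le, fun u v h => h.elim, ?_, fun u v h => h.elim⟩
    simp [hE0]
  · -- basic positivity
    set n : ℕ := Fintype.card V with hn
    have hk0 : (0:ℝ) < (k:ℝ) := by positivity
    have hkR : (2:ℝ) ≤ (k:ℝ) := by exact_mod_cast hk
    set p : ℝ := (k:ℝ)⁻¹ with hp
    have hp0 : 0 < p := by positivity
    have hp1 : p ≤ 1/2 := by
      rw [hp]
      rw [show (1:ℝ)/2 = (2:ℝ)⁻¹ by norm_num]
      exact inv_anti₀ (by norm_num) hkR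
    set q : ℝ := 1 - p with hq
    have hq0 : 0 < q := by rw [hq]; linarith
    have hq1 : q ≤ 1 := by rw [hq]; linarith
    have hpq : p + q = 1 := by rw [hq]; ring
    -- edge finset of GE
    have hcardE : (GE.edgeSet.ncard : ℝ) = (GE.edgeFinset.card : ℝ) := by
      rw [← SimpleGraph.coe_edgeFinset, Set.ncard_coe_finset]
    have hEpos : 0 < GE.edgeFinset.card := by
      rcases Nat.eq_zero_or_pos GE.edgeFinset.card with h | h
      · exfalso; apply hE0
        rw [← SimpleGraph.coe_edgeFinset, Set.ncard_coe_finset, h]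
      · exact h
    obtain ⟨e₀, he₀⟩ := Finset.card_pos.mp hEpos
    have hVne : Nonempty V := ⟨e₀.out.1⟩
    have hn0 : 0 < n := Fintype.card_pos
    have hn0R : (0:ℝ) < (n:ℝ) := by exact_mod_cast hn0
    set M : ℝ := (GE.edgeFinset.card : ℝ) with hM
    have hM0 : 0 < M := by rw [hM]; exact_mod_cast hEpos
    -- notation
    set w : Finset V → ℝ := fun W => p ^ W.card * q ^ (n - W.card) with hw
    have hwpos : ∀ W : Finset V, 0 < w W := fun W => by
      rw [hw]; positivity
    set HG : Finset V → SimpleGraph V := fun W => privGraph GE ed hsymm W with hHG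
    set m : Finset V → ℝ := fun W => ((HG W).edgeFinset.card : ℝ) with hm
    have hm0 : ∀ W, 0 ≤ m W := fun W => by rw [hm]; positivity
    -- filter description of edge finset
    have hfil : ∀ W : Finset V, (HG W).edgeFinset
        = GE.edgeFinset.filter (fun e => e ∈ (HG W).edgeSet) := by
      intro W
      ext e
      simp only [Finset.mem_filter, SimpleGraph.mem_edgeFinset]
      exact ⟨fun h => ⟨SimpleGraph.edgeSet_mono (privGraph_le GE ed hsymm W) h, h⟩,
        fun h => h.2⟩
    -- Step B : per-edge expectation
    have hEm : ∀ e ∈ GE.edgeFinset, p ^ 2 * q ^ (k - 2) ≤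
        ∑ W ∈ (univ : Finset V).powerset,
          (if e ∈ (HG W).edgeSet then w W else 0) := by
      intro e he
      induction e using Sym2.ind with
      | _ u v =>
        rw [SimpleGraph.mem_edgeFinset, SimpleGraph.mem_edgeSet] at he
        have huv : u ≠ v := he.ne
        have hcond : ∀ W : Finset V, (s(u,v) ∈ (HG W).edgeSet) ↔
            (({u,v} : Finset V) ⊆ W ∧ Disjoint (ed u v \ {u,v}) W) := by
          intro W
          rw [SimpleGraph.mem_edgeSet, hHG, privGraph_adj]
          constructor
          · rintro ⟨h1, h2, h3, h4⟩
            constructor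
            · intro x hx
              rcases Finset.mem_insert.mp hx with h | h
              · rw [h]; exact h2
              · rw [Finset.mem_singleton.mp h]; exact h3
            · rw [Finset.disjoint_right]
              intro x hxW hxs
              rw [Finset.mem_sdiff] at hxs
              rcases h4 x hxW hxs.1 with rfl | rfl
              · exact hxs.2 (by simp)
              · exact hxs.2 (by simp)
          · rintro ⟨h1, h2⟩
            refine ⟨he, h1 (by simp), h1 (by simp), fun x hx hxe => ?_⟩
            by_contra hne
            push_neg at hne
            exact (Finset.disjoint_right.mp h2 hx)
              (Finset.mem_sdiff.mpr ⟨hxe, by simp [hne.1, hne.2]⟩)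
        have hrw : (∑ W ∈ (univ : Finset V).powerset,
              (if s(u,v) ∈ (HG W).edgeSet then w W else 0))
            = ∑ W ∈ (univ : Finset V).powerset,
              (if (({u,v} : Finset V) ⊆ W ∧ Disjoint (ed u v \ {u,v}) W)
                then p ^ W.card * q ^ (n - W.card) else 0) := by
          apply Finset.sum_congr rfl
          intro W _
          by_cases h : (({u,v} : Finset V) ⊆ W ∧ Disjoint (ed u v \ {u,v}) W)
          · rw [if_pos h, if_pos ((hcond W).mpr h), hw]
          · rw [if_neg h, if_neg (fun hh => h ((hcond W).mp hh))]
        rw [hrw, sum_weight_cond p q hpq _ _ Finset.disjoint_sdiff]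
        have hsub : ({u,v} : Finset V) ⊆ ed u v := by
          intro x hx
          rcases Finset.mem_insert.mp hx with h | h
          · rw [h]; exact (hin u v he).1
          · rw [Finset.mem_singleton.mp h]; exact (hin u v he).2
        rw [Finset.card_pair huv, Finset.card_sdiff_of_subset hsub, Finset.card_pair huv]
        have hle : (ed u v).card - 2 ≤ k - 2 :=
          Nat.sub_le_sub_right (hrank _ (hmem u v he)) 2
        exact mul_le_mul_of_nonneg_left (pow_le_pow_of_le_one hq0.le hq1 hle)
          (by positivity)
    -- Step C : normalization and first moment
    have hS1 : ∑ W ∈ (univ : Finset V).powerset, w W * (W.card : ℝ) = (n : ℝ) * p := by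
      have hterm : ∀ W ∈ (univ : Finset V).powerset, w W * (W.card : ℝ)
          = ∑ v ∈ (univ : Finset V),
            (if ({v} : Finset V) ⊆ W ∧ Disjoint (∅ : Finset V) W then w W else 0) := by
        intro W _
        have hc : ∀ v ∈ (univ : Finset V),
            (if ({v} : Finset V) ⊆ W ∧ Disjoint (∅ : Finset V) W then w W else 0)
              = (if v ∈ W then w W else 0) := by
          intro v _
          by_cases h : v ∈ W
          · rw [if_pos h, if_pos ⟨Finset.singleton_subset_iff.mpr h, Finset.disjoint_empty_left W⟩]
          · rw [if_neg h, if_neg (fun hh => h (Finset.singleton_subset_iff.mp hh.1))]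
        rw [Finset.sum_congr rfl hc, Finset.sum_ite_mem, Finset.univ_inter,
          Finset.sum_const, nsmul_eq_mul, mul_comm]
      rw [Finset.sum_congr rfl hterm, Finset.sum_comm]
      have hv : ∀ v ∈ (univ : Finset V),
          (∑ W ∈ (univ : Finset V).powerset,
            if ({v} : Finset V) ⊆ W ∧ Disjoint (∅ : Finset V) W then w W else 0) = p := by
        intro v _
        have h := sum_weight_cond p q hpq ({v} : Finset V) ∅ (Finset.disjoint_empty_right _)
        simp only [Finset.card_singleton, Finset.card_empty, pow_one, pow_zero, mul_one] at h
        rw [← h]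
      rw [Finset.sum_congr rfl hv, Finset.sum_const, Finset.card_univ, nsmul_eq_mul, ← hn]
    -- Step D : second moment
    have hS2 : p ^ 2 * q ^ (k - 2) * M ≤ ∑ W ∈ (univ : Finset V).powerset, w W * m W := by
      have hmW : ∀ W ∈ (univ : Finset V).powerset, w W * m W
          = ∑ e ∈ GE.edgeFinset, (if e ∈ (HG W).edgeSet then w W else 0) := by
        intro W _
        have h1 : (HG W).edgeFinset.card
            = ∑ e ∈ GE.edgeFinset, (if e ∈ (HG W).edgeSet then 1 else 0) := by
          rw [hfil W, Finset.card_filter]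
        have h2 : m W = ∑ e ∈ GE.edgeFinset, (if e ∈ (HG W).edgeSet then (1:ℝ) else 0) := by
          rw [hm]
          simp only
          rw [h1]
          push_cast
          apply Finset.sum_congr rfl
          intro e _
          split <;> simp
        rw [h2, Finset.mul_sum]
        apply Finset.sum_congr rfl
        intro e _
        split <;> simp
      rw [Finset.sum_congr rfl hmW, Finset.sum_comm]
      calc p ^ 2 * q ^ (k - 2) * M
          = ∑ _e ∈ GE.edgeFinset, p ^ 2 * q ^ (k - 2) := by
            rw [Finset.sum_const, nsmul_eq_mul, hM]; ring
        _ ≤ _ := Finset.sum_le_sum hEm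
    -- Step E : nonnegative expectation of the balance
    have hsum : 0 ≤ ∑ W ∈ (univ : Finset V).powerset,
        w W * (((n:ℝ) * p) * m W - (p ^ 2 * q ^ (k - 2) * M) * (W.card : ℝ)) := by
      have hexp : ∑ W ∈ (univ : Finset V).powerset,
          w W * (((n:ℝ) * p) * m W - (p ^ 2 * q ^ (k - 2) * M) * (W.card : ℝ))
          = ((n:ℝ) * p) * (∑ W ∈ (univ : Finset V).powerset, w W * m W)
            - (p ^ 2 * q ^ (k - 2) * M) * (∑ W ∈ (univ : Finset V).powerset, w W * (W.card : ℝ)) := by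
        rw [Finset.mul_sum, Finset.mul_sum, ← Finset.sum_sub_distrib]
        apply Finset.sum_congr rfl
        intro W _
        ring
      rw [hexp, hS1]
      have hnp : 0 < (n:ℝ) * p := by positivity
      nlinarith [hS2, mul_le_mul_of_nonneg_left hS2 hnp.le]
    -- Step F : a good nonempty W exists
    have hm_empty : m (∅ : Finset V) = 0 := by
      rw [hm]
      simp only
      norm_cast
      rw [Finset.card_eq_zero, hfil, Finset.filter_eq_empty_iff]
      intro e he
      clear he
      induction e using Sym2.ind with
      | _ u v =>
        rw [SimpleGraph.mem_edgeSet, hHG]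
        simp only [privGraph_adj]
        rintro ⟨-, h, -⟩
        exact absurd h (Finset.notMem_empty u)
    obtain ⟨W, hWne, hWgood⟩ : ∃ W : Finset V, W ≠ ∅ ∧
        0 ≤ ((n:ℝ) * p) * m W - (p ^ 2 * q ^ (k - 2) * M) * (W.card : ℝ) := by
      by_contra hcon
      push_neg at hcon
      set T := ((univ : Finset V).powerset).erase ∅ with hT
      have hTne : T.Nonempty := by
        obtain ⟨v⟩ := hVne
        exact ⟨{v}, Finset.mem_erase.mpr ⟨by simp, Finset.mem_powerset.mpr (subset_univ _)⟩⟩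
      have hneg : ∑ W ∈ T,
          w W * (((n:ℝ) * p) * m W - (p ^ 2 * q ^ (k - 2) * M) * (W.card : ℝ)) < 0 := by
        apply Finset.sum_neg ?_ hTne
        intro W hW
        have hWne' : W ≠ ∅ := (Finset.mem_erase.mp hW).1
        exact mul_neg_of_pos_of_neg (hwpos W) (hcon W (Finset.nonempty_iff_ne_empty.mpr hWne'))
      have hsplit : ∑ W ∈ (univ : Finset V).powerset,
          w W * (((n:ℝ) * p) * m W - (p ^ 2 * q ^ (k - 2) * M) * (W.card : ℝ))
          = w ∅ * (((n:ℝ) * p) * m ∅ - (p ^ 2 * q ^ (k - 2) * M) * (((∅ : Finset V).card : ℝ)))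
            + ∑ W ∈ T,
              w W * (((n:ℝ) * p) * m W - (p ^ 2 * q ^ (k - 2) * M) * (W.card : ℝ)) := by
        rw [hT]
        exact (Finset.add_sum_erase _ _ (Finset.mem_powerset.mpr (Finset.empty_subset _))).symm
      rw [hsplit, hm_empty] at hsum
      simp only [Finset.card_empty, Nat.cast_zero, mul_zero, sub_zero, add_zero] at hsum
      nlinarith [hsum, hneg]
    -- Step G : conclusion
    refine ⟨W, HG W, privGraph_le GE ed hsymm W, ?_, ?_, ?_⟩
    · intro u v h
      exact ⟨h.2.1, h.2.2.1⟩
    · have hWc : 0 < (W.card : ℝ) := by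
        have : W.Nonempty := Finset.nonempty_iff_ne_empty.mpr hWne
        exact_mod_cast Finset.card_pos.mpr this
      have hncard : (((HG W).edgeSet.ncard : ℕ) : ℝ) = m W := by
        rw [hm]
        simp only
        rw [← SimpleGraph.coe_edgeFinset, Set.ncard_coe_finset]
      have hexp1 : (0:ℝ) < Real.exp 1 := Real.exp_pos 1
      rw [ge_iff_le, hcardE, hncard, div_le_div_iff₀ (by positivity) hWc]
      -- goal : 2 * M * W.card ≤ 2 * m W * (n * e * k)
      have hqe : Real.exp (-1) ≤ q ^ (k - 2) := by
        rw [hq, hp]; exact exp_neg_one_le k hk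
      have hee : Real.exp 1 * Real.exp (-1) = 1 := by
        rw [← Real.exp_add]; norm_num
      have hA : p ^ 2 * q ^ (k - 2) * M * (W.card : ℝ) ≤ (n:ℝ) * p * m W := by
        nlinarith [hWgood]
      rw [hp] at hA
      have h3 := mul_le_mul_of_nonneg_left hA
        (by positivity : (0:ℝ) ≤ (k:ℝ) * (k:ℝ))
      have e1 : (k:ℝ) * (k:ℝ) * (((k:ℝ)⁻¹) ^ 2 * q ^ (k - 2) * M * (W.card : ℝ))
          = q ^ (k - 2) * M * (W.card : ℝ) := by
        field_simp
      have e2 : (k:ℝ) * (k:ℝ) * ((n:ℝ) * ((k:ℝ)⁻¹) * m W) = (n:ℝ) * (k:ℝ) * m W := by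
        field_simp
      rw [e1, e2] at h3
      -- h3 : q^(k-2) * M * W.card ≤ n * k * m W
      clear_value m M HG w q p n
      have hB : Real.exp (-1) * (M * (W.card : ℝ)) ≤ q ^ (k - 2) * (M * (W.card : ℝ)) :=
        mul_le_mul_of_nonneg_right hqe (mul_nonneg hM0.le hWc.le)
      have hC := mul_le_mul_of_nonneg_left h3 hexp1.le
      have hD := mul_le_mul_of_nonneg_left hB hexp1.le
      have hEq : Real.exp 1 * (Real.exp (-1) * (M * (W.card : ℝ))) = M * (W.card : ℝ) := by
        rw [← mul_assoc, hee, one_mul]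
      nlinarith [hC, hD, hEq]
    · intro u v h x hx hxe
      exact h.2.2.2 x hx hxe
end

section
/- If a graph G has no K_t minor, then every ball hypergraph 𝓗 of G has VC-dimension at most t − 1. -/
open SimpleGraph

section aux
variable {V : Type} {G : SimpleGraph V} {u v w : V}

private lemma triangle' (h1 : G.Reachable u v) (h2 : G.Reachable v w) :
    G.dist u w ≤ G.dist u v + G.dist v w := by
  obtain ⟨p, hp⟩ := h1.exists_walk_length_eq_dist
  obtain ⟨q, hq⟩ := h2.exists_walk_length_eq_dist
  calc G.dist u w ≤ (p.append q).length := SimpleGraph.dist_le _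
  _ = _ := by rw [Walk.length_append, hp, hq]

private lemma dist_split [DecidableEq V] (p : G.Walk u v)
    (hp : p.length = G.dist u v) (hw : w ∈ p.support) :
    G.dist u w + G.dist w v = G.dist u v := by
  have h1 : G.dist u w ≤ (p.takeUntil w hw).length := SimpleGraph.dist_le _
  have h2 : G.dist w v ≤ (p.dropUntil w hw).length := SimpleGraph.dist_le _
  have h3 : (p.takeUntil w hw).length + (p.dropUntil w hw).length = p.length := by
    rw [← Walk.length_append, p.take_spec hw]
  have h4 : G.dist u v ≤ G.dist u w + G.dist w v :=
    triangle' ⟨p.takeUntil w hw⟩ ⟨p.dropUntil w hw⟩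
  omega

private lemma reachable_induce {s : Set V} : ∀ {a b : V} (p : G.Walk a b)
    (hp : ∀ u ∈ p.support, u ∈ s),
    (G.induce s).Reachable ⟨a, hp a p.start_mem_support⟩ ⟨b, hp b p.end_mem_support⟩
  | a, _, Walk.nil, hp => Reachable.refl _
  | a, b, Walk.cons h q, hp => by
      refine Reachable.trans (Adj.reachable (v := ⟨_, hp _ (by simp)⟩) ?_)
        (reachable_induce q fun u hu => hp u (by simp [hu]))
      simpa using h

private lemma exists_boundary {s : Set V} : ∀ {a b : V} (p : G.Walk a b),
    a ∈ s → b ∉ s → ∃ x y, G.Adj x y ∧ x ∈ s ∧ y ∉ s ∧ y ∈ p.support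
  | _, _, Walk.nil, ha, hb => absurd ha hb
  | a, b, Walk.cons (v := c) h q, ha, hb => by
      by_cases hc : c ∈ s
      · obtain ⟨x, y, hxy, hx, hy, hys⟩ := exists_boundary q hc hb
        exact ⟨x, y, hxy, hx, hy, by simp [hys]⟩
      · exact ⟨a, c, h, ha, hc, by simp⟩

end aux
/-- If `G` has no `K_t` minor, then every ball hypergraph `𝓗` of `G` has VC-dimension
at most `t - 1`: every (finite) set of vertices shattered by the edges of `𝓗` has
cardinality at most `t - 1`. -/
theorem vc_dim_le_of_Kt_minor_free {V : Type} (G : SimpleGraph V) (t : ℕ)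
    (hK : ¬ GraphMinor (⊤ : SimpleGraph (Fin t)) G)
    (E : Set (Set V)) (hE : IsBallHypergraph G E)
    (X : Finset V) (hshatter : ∀ X' ⊆ X, ∃ e ∈ E, e ∩ (X : Set V) = (X' : Set V)) :
    X.card ≤ t - 1 := by
  classical
  by_contra hcard
  push_neg at hcard
  rcases Nat.eq_zero_or_pos t with rfl | ht
  · exact hK ⟨fun i => i.elim0, fun i => i.elim0, fun i => i.elim0, fun i => i.elim0⟩
  have htX : t ≤ X.card := by omega
  obtain ⟨Y, hYX, hYcard⟩ := Finset.exists_subset_card_eq htX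
  have hcardY : Fintype.card Y = t := by rw [Fintype.card_coe, hYcard]
  let e := Fintype.equivFinOfCardEq hcardY
  let x : Fin t → V := fun i => ((e.symm i : Y) : V)
  have hxinj : Function.Injective x := fun i j h =>
    e.symm.injective (Subtype.ext h)
  have hxX : ∀ i, x i ∈ X := fun i => hYX (e.symm i).2
  let cell : Fin t → Set V := fun i =>
    {v | G.Reachable (x i) v ∧ ∀ j, G.Reachable (x j) v →
      G.dist (x i) v < G.dist (x j) v ∨ (G.dist (x i) v = G.dist (x j) v ∧ i ≤ j)}
  have hxc : ∀ i, x i ∈ cell i := by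
    intro i
    refine ⟨Reachable.refl _, fun j hj => ?_⟩
    rcases eq_or_ne j i with rfl | hne
    · exact Or.inr ⟨rfl, le_refl _⟩
    · left
      have hpos := hj.pos_dist_of_ne (fun h => hne (hxinj h.symm).symm)
      simpa [SimpleGraph.dist_self] using hpos
  have hdisj' : ∀ i j, i ≠ j → ∀ v, v ∈ cell i → v ∈ cell j → False := by
    intro i j hij v hvi hvj
    obtain ⟨hri, hi⟩ := hvi
    obtain ⟨hrj, hj⟩ := hvj
    rcases hi j hrj with h1 | ⟨h1, h2⟩ <;> rcases hj i hri with h3 | ⟨h3, h4⟩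
    · omega
    · omega
    · omega
    · exact hij (le_antisymm h2 h4)
  have hdisj : Pairwise fun i j => Disjoint (cell i) (cell j) := by
    intro i j hij
    rw [Set.disjoint_left]
    intro v hvi hvj
    exact hdisj' i j hij v hvi hvj
  have hclose : ∀ i v, v ∈ cell i → ∀ (p : G.Walk (x i) v),
      p.length = G.dist (x i) v → ∀ u ∈ p.support, u ∈ cell i := by
    intro i v hv p hp u hu
    have hsplit := dist_split p hp hu
    have hr1 : G.Reachable (x i) u := ⟨p.takeUntil u hu⟩
    have hr2 : G.Reachable u v := ⟨p.dropUntil u hu⟩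
    refine ⟨hr1, fun j hj => ?_⟩
    have hrjv : G.Reachable (x j) v := hj.trans hr2
    have htri : G.dist (x j) v ≤ G.dist (x j) u + G.dist u v := triangle' hj hr2
    rcases lt_or_ge (G.dist (x i) u) (G.dist (x j) u) with hlt | hge
    · exact Or.inl hlt
    · rcases hv.2 j hrjv with h1 | ⟨h1, h2⟩
      · exfalso; omega
      · exact Or.inr ⟨by omega, h2⟩
  have hconn : ∀ i, (G.induce (cell i)).Connected := by
    intro i
    haveI : Nonempty (cell i) := ⟨⟨x i, hxc i⟩⟩
    have key : ∀ c : cell i, (G.induce (cell i)).Reachable ⟨x i, hxc i⟩ c := by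
      rintro ⟨v, hv⟩
      obtain ⟨p, hp⟩ := hv.1.exists_walk_length_eq_dist
      exact reachable_induce p (hclose i v hv p hp)
    exact ⟨fun a b => (key a).symm.trans (key b)⟩
  have hadj : ∀ i j, i ≠ j → ∃ u ∈ cell i, ∃ w ∈ cell j, G.Adj u w := by
    intro i j hij
    have hsub : ({x i, x j} : Finset V) ⊆ X := by
      intro a ha
      rcases Finset.mem_insert.mp ha with rfl | ha
      · exact hxX i
      · rw [Finset.mem_singleton.mp ha]; exact hxX j
    obtain ⟨B, hBE, hBX⟩ := hshatter _ hsub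
    obtain ⟨c, r, rfl⟩ := hE B hBE
    have hcoe : ((({x i, x j} : Finset V)) : Set V) = {x i, x j} := by simp
    rw [hcoe] at hBX
    have hxiB : x i ∈ G.gBall c r := by
      have h : x i ∈ G.gBall c r ∩ (X : Set V) := by rw [hBX]; simp
      exact h.1
    have hxjB : x j ∈ G.gBall c r := by
      have h : x j ∈ G.gBall c r ∩ (X : Set V) := by rw [hBX]; simp
      exact h.1
    have hmem : ∀ k : Fin t, G.Reachable c (x k) → G.dist c (x k) ≤ r →
        k = i ∨ k = j := by
      intro k h1 h2
      have hk : x k ∈ G.gBall c r ∩ (X : Set V) := ⟨⟨h1, h2⟩, hxX k⟩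
      rw [hBX] at hk
      rcases hk with h | h
      · exact Or.inl (hxinj h)
      · exact Or.inr (hxinj h)
    obtain ⟨p, hp⟩ := hxiB.1.exists_walk_length_eq_dist
    obtain ⟨q, hq⟩ := hxjB.1.exists_walk_length_eq_dist
    have key : ∀ (m : Fin t) (s : G.Walk c (x m)), s.length = G.dist c (x m) →
        G.dist c (x m) ≤ r → ∀ u ∈ s.support, u ∈ cell i ∪ cell j := by
      intro m s hs hsr u hu
      have hsplit := dist_split s hs hu
      have hcu : G.Reachable c u := ⟨s.takeUntil u hu⟩
      have hum : G.Reachable u (x m) := ⟨s.dropUntil u hu⟩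
      set S : Finset (Fin t) := Finset.univ.filter (fun k => G.Reachable (x k) u)
        with hS
      have hmS : m ∈ S := by
        rw [hS, Finset.mem_filter]; exact ⟨Finset.mem_univ _, hum.symm⟩
      obtain ⟨k0, hk0S, hk0min⟩ := S.exists_min_image (fun k => G.dist (x k) u) ⟨m, hmS⟩
      set T := S.filter (fun k => G.dist (x k) u = G.dist (x k0) u) with hT
      have hTne : T.Nonempty := ⟨k0, by rw [hT, Finset.mem_filter]; exact ⟨hk0S, rfl⟩⟩
      set k := T.min' hTne with hk
      have hkT : k ∈ T := T.min'_mem hTne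
      have hkS : k ∈ S := (Finset.mem_filter.mp hkT).1
      have hkd : G.dist (x k) u = G.dist (x k0) u := (Finset.mem_filter.mp hkT).2
      have hkru : G.Reachable (x k) u := (Finset.mem_filter.mp hkS).2
      have hucell : u ∈ cell k := by
        refine ⟨hkru, fun l hl => ?_⟩
        have hlS : l ∈ S := by
          rw [hS, Finset.mem_filter]; exact ⟨Finset.mem_univ _, hl⟩
        have h1 : G.dist (x k0) u ≤ G.dist (x l) u := hk0min l hlS
        rcases lt_or_ge (G.dist (x k) u) (G.dist (x l) u) with h | h
        · exact Or.inl h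
        · have hlT : l ∈ T := by
            rw [hT, Finset.mem_filter]; exact ⟨hlS, by omega⟩
          exact Or.inr ⟨by omega, T.min'_le l hlT⟩
      have hkm : G.dist (x k) u ≤ G.dist (x m) u := by
        have := hk0min m hmS; omega
      have hcxk : G.Reachable c (x k) := hcu.trans hkru.symm
      have hdk : G.dist c (x k) ≤ r := by
        have t1 : G.dist c (x k) ≤ G.dist c u + G.dist u (x k) :=
          triangle' hcu hkru.symm
        have t2 : G.dist u (x k) = G.dist (x k) u := SimpleGraph.dist_comm ..
        have t3 : G.dist u (x m) = G.dist (x m) u := SimpleGraph.dist_comm ..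
        omega
      rcases hmem k hcxk hdk with rfl | rfl
      · exact Or.inl hucell
      · exact Or.inr hucell
    have hxjni : x j ∉ cell i := fun h => hdisj' i j hij (x j) h (hxc j)
    obtain ⟨u, w, huw, hu, hw, hws⟩ :=
      exists_boundary (p.reverse.append q) (hxc i) hxjni
    have hwsupp : w ∈ p.support ∨ w ∈ q.support := by
      rcases (Walk.mem_support_append_iff _ _).mp hws with h | h
      · left; rwa [Walk.support_reverse, List.mem_reverse] at h
      · right; exact h
    have hwc : w ∈ cell i ∪ cell j := by
      rcases hwsupp with h | h
      · exact key i p hp hxiB.2 w h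
      · exact key j q hq hxjB.2 w h
    rcases hwc with h | h
    · exact absurd h hw
    · exact ⟨u, hu, w, h, huw⟩
  exact hK ⟨cell, hconn, hdisj, fun i j hij => hadj i j (by simpa using hij)⟩
end
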